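/- For a > 0, B > 0, T > 0, and τ ∈ [0, T], the following exact identity holds: ∫₀^T (T-u)( e^{-2au} + e^{-a|u+τ|} e^{-a|u-τ|} ) du = ( Tτ + T/(2a) - τ²/2 - τ/(2a) - 1/(4a²) ) e^{-2aτ} + (1/(2a²)) e^{-2aT} + T/(2a) - 1/(4a²). -/

import Mathlib

open Real intervalIntegral

/-!
For `u, τ ≥ 0` one has `|u + τ| + |u - τ| = 2 max u τ`, so the integrand is
`(T - u) (e^{-2au} + e^{-2a max u τ})`. Splitting `[0, T]` at `τ`, everything reduces to
integrals of `(T - u) e^{-cu}`, which has the elementary antiderivative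
`((u - T)/c + 1/c²) e^{-cu}`, and of `(T - u)` times a constant.
-/

theorem abs_add_add_abs_sub_eq_two_mul_max {u τ : ℝ} (hu : 0 ≤ u) (hτ : 0 ≤ τ) :
    |u + τ| + |u - τ| = 2 * max u τ := by
  rcases le_total u τ with h | h
  · rw [abs_of_nonneg (by linarith), abs_of_nonpos (by linarith), max_eq_right h]; ring
  · rw [abs_of_nonneg (by linarith), abs_of_nonneg (by linarith), max_eq_left h]; ring

theorem exp_neg_mul_abs_add_mul_exp_neg_mul_abs_sub (a : ℝ) {u τ : ℝ} (hu : 0 ≤ u)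
    (hτ : 0 ≤ τ) :
    exp (-(a * |u + τ|)) * exp (-(a * |u - τ|)) = exp (-(2 * a * max u τ)) := by
  rw [← exp_add, ← neg_add, ← mul_add, abs_add_add_abs_sub_eq_two_mul_max hu hτ]
  ring_nf

theorem hasDerivAt_sub_mul_exp_neg_mul {c : ℝ} (hc : c ≠ 0) (T u : ℝ) :
    HasDerivAt (fun u => ((u - T) / c + 1 / c ^ 2) * exp (-(c * u)))
      ((T - u) * exp (-(c * u))) u := by
  have hlin : HasDerivAt (fun u => (u - T) / c + 1 / c ^ 2) (1 / c) u :=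
    (((hasDerivAt_id u).sub_const T).div_const c).add_const _
  have hexp : HasDerivAt (fun u => exp (-(c * u))) (exp (-(c * u)) * -c) u :=
    (((hasDerivAt_id u).const_mul c).neg).exp.congr_deriv (by simp)
  refine (hlin.fun_mul hexp).congr_deriv ?_
  field_simp
  ring

theorem integral_sub_mul_exp_neg_mul {c : ℝ} (hc : c ≠ 0) (T x y : ℝ) :
    ∫ u in x..y, (T - u) * exp (-(c * u)) =
      ((y - T) / c + 1 / c ^ 2) * exp (-(c * y)) -
        ((x - T) / c + 1 / c ^ 2) * exp (-(c * x)) :=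
  integral_eq_sub_of_hasDerivAt (fun u _ => hasDerivAt_sub_mul_exp_neg_mul hc T u)
    (Continuous.intervalIntegrable (by fun_prop) _ _)

theorem integral_sub_mul_const (T k x y : ℝ) :
    ∫ u in x..y, (T - u) * k = (T * (y - x) - (y ^ 2 - x ^ 2) / 2) * k := by
  rw [integral_mul_const, integral_comp_sub_left (fun u => u), integral_id]
  ring

theorem integral_sub_mul_exp_neg_mul_max {c T τ : ℝ} (hτ0 : 0 ≤ τ) (hτT : τ ≤ T) :
    ∫ u in (0 : ℝ)..T, (T - u) * exp (-(c * max u τ)) =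
      (T * τ - τ ^ 2 / 2) * exp (-(c * τ)) + ∫ u in τ..T, (T - u) * exp (-(c * u)) := by
  have hint : ∀ x y : ℝ, IntervalIntegrable (fun u => (T - u) * exp (-(c * max u τ)))
      MeasureTheory.volume x y := fun x y => Continuous.intervalIntegrable (by fun_prop) x y
  rw [← integral_add_adjacent_intervals (hint 0 τ) (hint τ T)]
  congr 1
  · calc ∫ u in (0 : ℝ)..τ, (T - u) * exp (-(c * max u τ))
        _ = ∫ u in (0 : ℝ)..τ, (T - u) * exp (-(c * τ)) := integral_congr fun u hu => by
          rw [Set.uIcc_of_le hτ0] at hu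
          simp only [max_eq_right hu.2]
        _ = (T * τ - τ ^ 2 / 2) * exp (-(c * τ)) := by
          rw [integral_sub_mul_const]
          ring
  · refine integral_congr fun u hu => ?_
    rw [Set.uIcc_of_le hτT] at hu
    simp only [max_eq_left hu.1]

theorem exp_cov_integral_general (a T τ : ℝ) (ha : 0 < a)
    (hτ : τ ∈ Set.Icc 0 T) :
    ∫ u in (0:ℝ)..T, (T - u) * (Real.exp (-(2 * a * u)) +
        Real.exp (-(a * |u + τ|)) * Real.exp (-(a * |u - τ|))) =
      (T * τ + T / (2 * a) - τ ^ 2 / 2 - τ / (2 * a) - 1 / (4 * a ^ 2)) *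
          Real.exp (-(2 * a * τ)) +
        (1 / (2 * a ^ 2)) * Real.exp (-(2 * a * T)) + T / (2 * a) - 1 / (4 * a ^ 2) := by
  obtain ⟨hτ0, hτT⟩ := hτ
  have hc : 2 * a ≠ 0 := by positivity
  have hintegrand : ∀ u ∈ Set.uIcc 0 T, (T - u) * (exp (-(2 * a * u)) +
      exp (-(a * |u + τ|)) * exp (-(a * |u - τ|))) =
        (T - u) * exp (-(2 * a * u)) + (T - u) * exp (-(2 * a * max u τ)) := by
    intro u hu
    rw [Set.uIcc_of_le (hτ0.trans hτT)] at hu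
    rw [exp_neg_mul_abs_add_mul_exp_neg_mul_abs_sub a hu.1 hτ0, mul_add]
  rw [integral_congr hintegrand, integral_add (Continuous.intervalIntegrable (by fun_prop) _ _)
      (Continuous.intervalIntegrable (by fun_prop) _ _),
    integral_sub_mul_exp_neg_mul_max hτ0 hτT, integral_sub_mul_exp_neg_mul hc,
    integral_sub_mul_exp_neg_mul hc]
  simp only [mul_zero, neg_zero, exp_zero]
  field_simp
  ring

theorem exp_cov_integral (a B T τ : ℝ) (ha : 0 < a) (hB : 0 < B) (hT : 0 < T)
    (hτ : τ ∈ Set.Icc 0 T) :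
    ∫ u in (0:ℝ)..T, (T - u) * (Real.exp (-(2 * a * u)) +
        Real.exp (-(a * |u + τ|)) * Real.exp (-(a * |u - τ|))) =
      (T * τ + T / (2 * a) - τ ^ 2 / 2 - τ / (2 * a) - 1 / (4 * a ^ 2)) *
          Real.exp (-(2 * a * τ)) +
        (1 / (2 * a ^ 2)) * Real.exp (-(2 * a * T)) + T / (2 * a) - 1 / (4 * a ^ 2) :=
  exp_cov_integral_general a T τ ha hτ
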